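/- If 0 < x ≤ y < 1/2, then Φ̄^{−1}(x) − Φ̄^{−1}(y) ≥ ( (Φ̄^{−1}(y))² / (1 + (Φ̄^{−1}(y))²) ) · (y − x)/( y·Φ̄^{−1}(y) ). -/

import Mathlib

open Real

/-- Standard normal density. -/
noncomputable def gphi (t : ℝ) : ℝ := (Real.sqrt (2 * Real.pi))⁻¹ * Real.exp (-(t ^ 2) / 2)

/-- Standard normal upper-tail (survival) function. -/
noncomputable def Phibar (t : ℝ) : ℝ := ∫ s in Set.Ioi t, gphi s

/-- Inverse of the standard normal upper-tail function. -/
noncomputable def PhibarInv (x : ℝ) : ℝ := Function.invFun Phibar x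

/-! Let `u = Φ̄⁻¹(y) ≤ v = Φ̄⁻¹(x)`; `u > 0` because `y < 1/2 = Φ̄(0)`. Since `φ` decreases on
`[0, ∞)`, `y - x = ∫_u^v φ ≤ φ(u) (v - u)`, and Mills' lower bound `u φ(u) / (1 + u²) ≤ Φ̄(u) = y`
turns this into the claim. Mills' bound follows by integrating
`(-φ(s)/s)' = φ(s) (1 + s⁻²) ≤ φ(s) (1 + u⁻²)` over `(u, ∞)`. -/

open MeasureTheory Set Filter Topology ProbabilityTheory

lemma gphi_eq_gaussianPDFReal : gphi = gaussianPDFReal 0 1 := by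
  ext t; simp [gphi, gaussianPDFReal]

lemma gphi_pos (t : ℝ) : 0 < gphi t :=
  gphi_eq_gaussianPDFReal ▸ gaussianPDFReal_pos 0 1 t one_ne_zero

lemma integrable_gphi : Integrable gphi :=
  gphi_eq_gaussianPDFReal ▸ integrable_gaussianPDFReal 0 1

lemma integral_gphi : ∫ t, gphi t = 1 :=
  gphi_eq_gaussianPDFReal ▸ integral_gaussianPDFReal_eq_one 0 one_ne_zero

lemma gphi_neg (t : ℝ) : gphi (-t) = gphi t := by
  simp [gphi]

lemma gphi_le_gphi {a b : ℝ} (ha : 0 ≤ a) (hab : a ≤ b) : gphi b ≤ gphi a := by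
  unfold gphi
  gcongr

lemma hasDerivAt_gphi (t : ℝ) : HasDerivAt gphi (-t * gphi t) t := by
  have h : HasDerivAt (fun s : ℝ => -(s ^ 2) / 2) (-t) t :=
    (((hasDerivAt_pow 2 t).fun_neg).div_const 2).congr_deriv (by ring)
  exact (h.exp.const_mul _).congr_deriv (by rw [gphi]; ring)

lemma tendsto_gphi_atTop : Tendsto gphi atTop (𝓝 0) := by
  have h : Tendsto (fun t : ℝ => -(t ^ 2) / 2) atTop atBot :=
    (tendsto_neg_atBot_iff.2 (tendsto_pow_atTop two_ne_zero)).atBot_div_const two_pos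
  rw [← mul_zero (Real.sqrt (2 * Real.pi))⁻¹]
  exact (tendsto_exp_atBot.comp h).const_mul _

lemma Phibar_eq_sub_integral (a t : ℝ) : Phibar t = Phibar a - ∫ s in a..t, gphi s := by
  wlog h : a ≤ t generalizing a t
  · rw [intervalIntegral.integral_symm, this t a (le_of_not_ge h)]; ring
  rw [intervalIntegral.integral_of_le h, Phibar, Phibar, ← Ioc_union_Ioi_eq_Ioi h,
    setIntegral_union (Ioc_disjoint_Ioi le_rfl) measurableSet_Ioi integrable_gphi.integrableOn
    integrable_gphi.integrableOn]
  ring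

lemma Phibar_strictAnti : StrictAnti Phibar := fun a b hab => by
  have := intervalIntegral.intervalIntegral_pos_of_pos integrable_gphi.intervalIntegrable
    gphi_pos hab
  linarith [Phibar_eq_sub_integral a b]

lemma continuous_Phibar : Continuous Phibar := by
  rw [funext (Phibar_eq_sub_integral 0)]
  exact continuous_const.sub
    (intervalIntegral.continuous_primitive (fun _ _ => integrable_gphi.intervalIntegrable) 0)

lemma tendsto_Phibar_atTop : Tendsto Phibar atTop (𝓝 0) := by
  have h := (tendsto_const_nhds (x := Phibar 0)).sub
    (intervalIntegral_tendsto_integral_Ioi 0 integrable_gphi.integrableOn tendsto_id)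
  rw [← Phibar, sub_self] at h
  exact h.congr fun t => (Phibar_eq_sub_integral 0 t).symm

lemma Phibar_neg (t : ℝ) : Phibar (-t) = 1 - Phibar t := by
  have h := integral_comp_neg_Ioi (-t) gphi
  simp only [gphi_neg, neg_neg] at h
  rw [Phibar, h, ← integral_gphi, ← intervalIntegral.integral_Iic_add_Ioi
    integrable_gphi.integrableOn integrable_gphi.integrableOn, Phibar]
  ring

lemma Phibar_zero : Phibar 0 = 1 / 2 := by
  linarith [neg_zero (G := ℝ) ▸ Phibar_neg 0]

lemma Ioo_subset_range_Phibar : Ioo 0 1 ⊆ range Phibar := by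
  rintro x ⟨h0, h1⟩
  obtain ⟨b, hb⟩ := (tendsto_Phibar_atTop.eventually_lt_const h0).exists
  obtain ⟨a, ha⟩ := (tendsto_Phibar_atTop.eventually_lt_const (sub_pos.2 h1)).exists
  exact intermediate_value_univ b (-a) continuous_Phibar ⟨hb.le, by linarith [Phibar_neg a]⟩

lemma Phibar_PhibarInv {x : ℝ} (hx : x ∈ Ioo 0 1) : Phibar (PhibarInv x) = x :=
  Function.invFun_eq (Ioo_subset_range_Phibar hx)

lemma Phibar_sub_Phibar_le {a b : ℝ} (ha : 0 ≤ a) (hab : a ≤ b) :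
    Phibar a - Phibar b ≤ gphi a * (b - a) := by
  rw [Phibar_eq_sub_integral a b, sub_sub_cancel]
  calc ∫ s in a..b, gphi s ≤ ∫ _ in a..b, gphi a :=
        intervalIntegral.integral_mono_on hab integrable_gphi.intervalIntegrable
          intervalIntegrable_const fun s hs => gphi_le_gphi ha hs.1
    _ = gphi a * (b - a) := by simp [mul_comm]

lemma hasDerivAt_neg_gphi_div {t : ℝ} (ht : t ≠ 0) :
    HasDerivAt (fun s => -(gphi s / s)) (gphi t * (1 + (t ^ 2)⁻¹)) t :=
  ((hasDerivAt_gphi t).div (hasDerivAt_id' t) ht).neg.congr_deriv (by field_simp; ring)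

lemma mul_gphi_div_le_Phibar {u : ℝ} (hu : 0 < u) : u * gphi u / (1 + u ^ 2) ≤ Phibar u := by
  have hderiv : ∀ s ∈ Ici u, HasDerivAt (fun s => -(gphi s / s)) (gphi s * (1 + (s ^ 2)⁻¹)) s :=
    fun s hs => hasDerivAt_neg_gphi_div (hu.trans_le hs).ne'
  have hnonneg : ∀ s ∈ Ioi u, 0 ≤ gphi s * (1 + (s ^ 2)⁻¹) :=
    fun s _ => (mul_pos (gphi_pos s) (by positivity)).le
  have hlim : Tendsto (fun s => -(gphi s / s)) atTop (𝓝 0) := by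
    simpa using (tendsto_gphi_atTop.div_atTop tendsto_id).neg
  have hint := integrableOn_Ioi_deriv_of_nonneg' hderiv hnonneg hlim
  have hval := integral_Ioi_of_hasDerivAt_of_nonneg' hderiv hnonneg hlim
  have key : gphi u / u ≤ Phibar u * (1 + (u ^ 2)⁻¹) :=
    calc gphi u / u = ∫ s in Ioi u, gphi s * (1 + (s ^ 2)⁻¹) := by rw [hval]; ring
      _ ≤ ∫ s in Ioi u, gphi s * (1 + (u ^ 2)⁻¹) :=
        setIntegral_mono_on hint (integrable_gphi.integrableOn.mul_const _) measurableSet_Ioi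
          fun s hs => by gcongr; exacts [(gphi_pos s).le, le_of_lt hs]
      _ = Phibar u * (1 + (u ^ 2)⁻¹) := integral_mul_const _ _
  rw [div_le_iff₀ (by positivity)]
  calc u * gphi u = u ^ 2 * (gphi u / u) := by field_simp
    _ ≤ u ^ 2 * (Phibar u * (1 + (u ^ 2)⁻¹)) := by gcongr
    _ = Phibar u * (1 + u ^ 2) := by field_simp; ring

theorem quantile_diff_lower_ratio (x y : ℝ) (hx0 : 0 < x) (hxy : x ≤ y) (hy : y < 1 / 2) :
    PhibarInv x - PhibarInv y ≥
      ((PhibarInv y) ^ 2 / (1 + (PhibarInv y) ^ 2)) * ((y - x) / (y * PhibarInv y)) := by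
  have hy0 : 0 < y := hx0.trans_le hxy
  set u := PhibarInv y
  set v := PhibarInv x
  have hu : Phibar u = y := Phibar_PhibarInv ⟨hy0, by linarith⟩
  have hv : Phibar v = x := Phibar_PhibarInv ⟨hx0, by linarith⟩
  have hu0 : 0 < u := Phibar_strictAnti.lt_iff_gt.1 (by rwa [hu, Phibar_zero])
  have huv : u ≤ v := Phibar_strictAnti.le_iff_ge.1 (by rwa [hu, hv])
  have hslope : y - x ≤ gphi u * (v - u) := hu ▸ hv ▸ Phibar_sub_Phibar_le hu0.le huv
  have hmills : u * gphi u ≤ y * (1 + u ^ 2) := by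
    have := hu ▸ mul_gphi_div_le_Phibar hu0
    rwa [div_le_iff₀ (by positivity)] at this
  rw [ge_iff_le, show u ^ 2 / (1 + u ^ 2) * ((y - x) / (y * u)) = u * (y - x) / (y * (1 + u ^ 2))
    by field_simp, div_le_iff₀ (by positivity)]
  calc u * (y - x) ≤ u * gphi u * (v - u) := by rw [mul_assoc]; gcongr
    _ ≤ y * (1 + u ^ 2) * (v - u) := by gcongr
    _ = (v - u) * (y * (1 + u ^ 2)) := by ring
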